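/- Boundedness of the Barth–Jespersen limited reconstruction: let a ∈ ℝ, d ∈ ℝ², x₀ ∈ ℝ², let v₁, v₂, v₃ ∈ ℝ² and let m ≤ a ≤ M be real bounds. For each k ∈ {1,2,3}, set pₖ = a + d · (vₖ − x₀) and define φₖ = min(1, (M − a)/(pₖ − a)) if pₖ > a, φₖ = min(1, (m − a)/(pₖ − a)) if pₖ < a, and φₖ = 1 if pₖ = a; set Φ = min{φ₁, φ₂, φ₃}. Then Φ ∈ [0, 1], and for every point x in the convex hull of v₁, v₂, v₃ the limited reconstruction satisfies m ≤ a + Φ · d · (x − x₀) ≤ M. -/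
import Mathlib


open RealInnerProductSpace

/-- The Barth–Jespersen limiting factor for a vertex value `pk`, cell average
`a` and bounds `m ≤ a ≤ M`. -/
noncomputable def bjPhi (a m M pk : ℝ) : ℝ :=
  if pk > a then min 1 ((M - a) / (pk - a))
  else if pk < a then min 1 ((m - a) / (pk - a))
  else 1

lemma bjPhi_mem (a m M pk : ℝ) (hm : m ≤ a) (hM : a ≤ M) :
    bjPhi a m M pk ∈ Set.Icc (0 : ℝ) 1 := by
  unfold bjPhi
  split_ifs with h1 h2
  · exact ⟨le_min one_pos.le (div_nonneg (by linarith) (by linarith)), min_le_left _ _⟩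
  · refine ⟨le_min one_pos.le ?_, min_le_left _ _⟩
    rw [div_nonneg_iff]; right; exact ⟨by linarith, by linarith⟩
  · exact ⟨zero_le_one, le_refl 1⟩

lemma bjPhi_bound (a m M pk t : ℝ) (hm : m ≤ a) (hM : a ≤ M)
    (ht0 : 0 ≤ t) (ht : t ≤ bjPhi a m M pk) :
    m ≤ a + t * (pk - a) ∧ a + t * (pk - a) ≤ M := by
  unfold bjPhi at ht
  split_ifs at ht with h1 h2
  · have h := (min_le_right _ _).trans' ht   -- t ≤ (M-a)/(pk-a)
    have hd : (0:ℝ) < pk - a := by linarith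
    have : t * (pk - a) ≤ M - a := by
      rw [← div_mul_cancel₀ (M - a) hd.ne']
      exact mul_le_mul_of_nonneg_right (le_trans ht (min_le_right _ _)) hd.le
    constructor
    · nlinarith
    · linarith
  · have hd : pk - a < 0 := by linarith
    have : m - a ≤ t * (pk - a) := by
      have h2' : t ≤ (m - a) / (pk - a) := le_trans ht (min_le_right _ _)
      have := mul_le_mul_of_nonpos_right h2' hd.le
      rw [div_mul_cancel₀ (m - a) hd.ne] at this
      linarith
    constructor
    · linarith
    · nlinarith
  · have : pk = a := le_antisymm (not_lt.mp h1) (not_lt.mp h2)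
    simp [this]; exact ⟨hm, hM⟩

/-- Boundedness of the Barth–Jespersen limited reconstruction: with
`pₖ = a + ⟪d, vₖ − x₀⟫`, the limiter `Φ = min {φ₁, φ₂, φ₃}` lies in `[0, 1]`
and the limited reconstruction `a + Φ ⟪d, x − x₀⟫` stays within `[m, M]` on the
triangle with vertices `v₁, v₂, v₃`. -/
theorem barth_jespersen_limited_reconstruction_bounded
    (a m M : ℝ) (d x₀ v₁ v₂ v₃ : EuclideanSpace ℝ (Fin 2))
    (hm : m ≤ a) (hM : a ≤ M)
    (p₁ p₂ p₃ : ℝ)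
    (hp₁ : p₁ = a + ⟪d, v₁ - x₀⟫)
    (hp₂ : p₂ = a + ⟪d, v₂ - x₀⟫)
    (hp₃ : p₃ = a + ⟪d, v₃ - x₀⟫)
    (Φ : ℝ)
    (hΦ : Φ = min (min (bjPhi a m M p₁) (bjPhi a m M p₂)) (bjPhi a m M p₃)) :
    Φ ∈ Set.Icc (0 : ℝ) 1 ∧
      ∀ x ∈ convexHull ℝ {v₁, v₂, v₃},
        m ≤ a + Φ * ⟪d, x - x₀⟫ ∧ a + Φ * ⟪d, x - x₀⟫ ≤ M := by
  have h1 := bjPhi_mem a m M p₁ hm hM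
  have h2 := bjPhi_mem a m M p₂ hm hM
  have h3 := bjPhi_mem a m M p₃ hm hM
  have hΦ0 : 0 ≤ Φ := by
    rw [hΦ]; exact le_min (le_min h1.1 h2.1) h3.1
  have hΦ1 : Φ ≤ 1 := by
    rw [hΦ]; exact (min_le_left _ _).trans ((min_le_left _ _).trans h1.2)
  refine ⟨⟨hΦ0, hΦ1⟩, ?_⟩
  -- the set where the reconstruction is within bounds
  set S : Set (EuclideanSpace ℝ (Fin 2)) :=
    {x | m ≤ a + Φ * ⟪d, x - x₀⟫ ∧ a + Φ * ⟪d, x - x₀⟫ ≤ M} with hS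
  have hconv : Convex ℝ S := by
    intro x hx y hy s t hs ht hst
    have hin : ⟪d, (s • x + t • y) - x₀⟫ = s * ⟪d, x - x₀⟫ + t * ⟪d, y - x₀⟫ := by
      have : (s • x + t • y) - x₀ = s • (x - x₀) + t • (y - x₀) := by
        have hst' : t = 1 - s := by linarith
        subst hst'; module
      rw [this, inner_add_right, real_inner_smul_right, real_inner_smul_right]
    have hx1 := hx.1; have hx2 := hx.2; have hy1 := hy.1; have hy2 := hy.2
    constructor <;> simp only [hS, Set.mem_setOf_eq, hin] <;> nlinarith
  have hvert : ∀ p v, p = a + ⟪d, v - x₀⟫ → Φ ≤ bjPhi a m M p → v ∈ S := by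
    intro p v hp hle
    have := bjPhi_bound a m M p Φ hm hM hΦ0 hle
    have hpe : p - a = ⟪d, v - x₀⟫ := by rw [hp]; ring
    rw [hpe] at this
    exact this
  have hsub : ({v₁, v₂, v₃} : Set _) ⊆ S := by
    intro v hv
    rcases hv with h | h | h
    · subst h; exact hvert p₁ v hp₁ (hΦ ▸ (min_le_left _ _).trans (min_le_left _ _))
    · subst h; exact hvert p₂ v hp₂ (hΦ ▸ (min_le_left _ _).trans (min_le_right _ _))
    · subst h; exact hvert p₃ v hp₃ (hΦ ▸ min_le_right _ _)
  intro x hx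
  exact convexHull_min hsub hconv hx
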